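/- Area law for graph states: Let G = (V, E) be a finite simple graph with |V| = N, and define the graph state vector ψ : (V → Fin 2) → ℂ by ψ(x) = 2^{−N/2} · (−1)^{q(x)}, where q(x) = ∑_{{u,v}∈E} x_u x_v (arithmetic in ℤ). Then ψ is a unit vector, and for every subset I ⊆ V, the reduced density matrix ρ_I of ψψ† on the sites in I satisfies S(ρ_I) ≤ |{{u, v} ∈ E : u ∈ I, v ∈ V∖I}|, i.e. the entanglement entropy in bits is at most the number of edges crossing the boundary between I and its complement. -/

import Mathlib

/-!
Write a configuration `w` of `V` as `x ⊔ z` with `x` on `I` and `z` on its complement.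
Edges inside `I` or inside its complement contribute signs depending on `x` alone or on `z`
alone, and a crossing edge `uv` with `u ∈ I` contributes `(-1) ^ (x_u z_v)`. So the coefficient
matrix `Ψ x z = ψ (x ⊔ z)` is a row rescaling of a matrix whose rows depend on `x` only through
the signs `(-1) ^ x_u` attached to the `k` crossing edges, and `rank Ψ ≤ 2 ^ k`. The reduced
state is `Ψ Ψᴴ`, a density matrix of rank at most `2 ^ k`, and by Jensen's inequality for `log`
the entropy of a density matrix is at most the logarithm of its rank.
-/

open scoped BigOperators
open Matrix

/-- The von Neumann entropy (in bits) of a matrix (junk value `0` if not Hermitian). -/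
noncomputable def vNEntropy {n : Type*} [Fintype n] [DecidableEq n]
    (ρ : Matrix n n ℂ) : ℝ :=
  if h : ρ.IsHermitian then -∑ i, h.eigenvalues i * Real.logb 2 (h.eigenvalues i) else 0

/-- The reduced density matrix (partial trace over the qubits outside `I`). -/
noncomputable def reduced {V : Type*} [Fintype V] [DecidableEq V] {d : ℕ} (I : Finset V)
    (ρ : Matrix (V → Fin d) (V → Fin d) ℂ) :
    Matrix ({i // i ∈ I} → Fin d) ({i // i ∈ I} → Fin d) ℂ :=
  fun x y => ∑ z : {i // i ∉ I} → Fin d,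
    ρ (fun i => if h : i ∈ I then x ⟨i, h⟩ else z ⟨i, h⟩)
      (fun i => if h : i ∈ I then y ⟨i, h⟩ else z ⟨i, h⟩)

open Finset
open scoped ComplexOrder

theorem Int.negOnePow_sum {ι : Type*} (s : Finset ι) (a : ι → ℤ) :
    (∑ i ∈ s, a i).negOnePow = ∏ i ∈ s, (a i).negOnePow := by
  classical
  induction s using Finset.induction_on with
  | empty => rfl
  | insert i s hi ih => rw [sum_insert hi, prod_insert hi, Int.negOnePow_add, ih]

theorem Int.negOnePow_mul (a b : ℤ) : (a * b).negOnePow = a.negOnePow ^ b := by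
  simp only [Int.negOnePow_def, _root_.zpow_mul]

theorem Int.cast_negOnePow_eq_zpow {R : Type*} [DivisionRing R] (n : ℤ) :
    ((n.negOnePow : ℤ) : R) = (-1) ^ n := by
  rcases n.even_or_odd with h | h
  · simp [Int.negOnePow_even _ h, h.neg_one_zpow]
  · simp [Int.negOnePow_odd _ h, h.neg_one_zpow]

theorem Matrix.rank_le_card_of_apply_eq_mul {m n κ R : Type*} [Fintype m] [DecidableEq m]
    [Fintype n] [Fintype κ] [CommRing R] [StrongRankCondition R] {M : Matrix m n R}
    (f : m → R) (α : m → κ) (Φ : κ → n → R) (h : ∀ x z, M x z = f x * Φ (α x) z) :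
    M.rank ≤ Fintype.card κ := by
  have hM : M = diagonal f * (of Φ).submatrix α id := by
    ext x z
    simp only [h, diagonal_mul, submatrix_apply, id_eq, of_apply]
  calc M.rank ≤ ((of Φ).submatrix α id).rank := hM ▸ rank_mul_le_right _ _
    _ ≤ (of Φ).rank := rank_submatrix_le _ _ _
    _ ≤ Fintype.card κ := rank_le_card_height _

theorem neg_sum_mul_logb_le_logb_card_support {ι : Type*} [Fintype ι] {p : ι → ℝ}
    (hp : ∀ i, 0 ≤ p i) (hsum : ∑ i, p i = 1) :
    -∑ i, p i * Real.logb 2 (p i) ≤ Real.logb 2 #{i | p i ≠ 0} := by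
  classical
  set t : Finset ι := {i | p i ≠ 0}
  have hpos : ∀ i ∈ t, 0 < p i := fun i hi => (hp i).lt_of_ne' (mem_filter.mp hi).2
  have hsum_t : ∑ i ∈ t, p i = 1 := by rw [sum_filter_ne_zero, hsum]
  have hentropy :
      -∑ i, p i * Real.logb 2 (p i) = (∑ i ∈ t, p i * Real.log (p i)⁻¹) / Real.log 2 := by
    rw [← sum_filter_of_ne (p := fun i => p i ≠ 0) fun i _ h h0 => h (by rw [h0, zero_mul]),
      sum_div, ← sum_neg_distrib]
    refine sum_congr rfl fun i _ => ?_
    rw [Real.logb, Real.log_inv]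
    ring
  have jensen : ∑ i ∈ t, p i * Real.log (p i)⁻¹ ≤ Real.log #t := by
    have := strictConcaveOn_log_Ioi.concaveOn.le_map_sum (t := t) (w := p)
      (p := fun i => (p i)⁻¹) (fun i _ => hp i) hsum_t
      (fun i hi => Set.mem_Ioi.mpr (inv_pos.mpr (hpos i hi)))
    simpa [smul_eq_mul, sum_congr rfl fun i hi => mul_inv_cancel₀ (hpos i hi).ne'] using this
  rw [hentropy]
  exact div_le_div_of_nonneg_right jensen (Real.log_nonneg one_le_two)

theorem vNEntropy_le_logb_of_rank_le {n : Type*} [Fintype n] [DecidableEq n] {ρ : Matrix n n ℂ}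
    (hρ : ρ.PosSemidef) (htr : ρ.trace = 1) {r : ℕ} (hr : ρ.rank ≤ r) :
    vNEntropy ρ ≤ Real.logb 2 r := by
  classical
  have hsum : ∑ i, hρ.1.eigenvalues i = 1 := by
    have h : ((∑ i, hρ.1.eigenvalues i : ℝ) : ℂ) = 1 := by
      rw [← htr, hρ.1.trace_eq_sum_eigenvalues, Complex.ofReal_sum]
      rfl
    exact_mod_cast h
  have hrank : #{i | hρ.1.eigenvalues i ≠ 0} = ρ.rank := by
    rw [hρ.1.rank_eq_card_non_zero_eigs, Fintype.card_subtype]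
  have hsupport : 0 < #{i | hρ.1.eigenvalues i ≠ 0} := by
    obtain ⟨i, -, hi⟩ := exists_ne_zero_of_sum_ne_zero (hsum.trans_ne one_ne_zero)
    exact card_pos.mpr ⟨i, mem_filter.mpr ⟨mem_univ i, hi⟩⟩
  rw [vNEntropy, dif_pos hρ.1]
  refine (neg_sum_mul_logb_le_logb_card_support hρ.eigenvalues_nonneg hsum).trans ?_
  gcongr
  · exact one_lt_two
  · rw [hrank]; exact_mod_cast hr

section PartialTrace

variable {V : Type*} [Fintype V] [DecidableEq V] {d : ℕ} (I : Finset V)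

def coeffMatrix (ψ : (V → Fin d) → ℂ) :
    Matrix ({i // i ∈ I} → Fin d) ({i // i ∉ I} → Fin d) ℂ :=
  of fun x z => ψ ((Equiv.piEquivPiSubtypeProd (· ∈ I) fun _ => Fin d).symm (x, z))

theorem reduced_of_mul_star (ψ : (V → Fin d) → ℂ) :
    reduced I (of fun x y => ψ x * starRingEnd ℂ (ψ y)) =
      coeffMatrix I ψ * (coeffMatrix I ψ)ᴴ := by
  ext x y
  simp only [reduced, of_apply, coeffMatrix, mul_apply, conjTranspose_apply, RCLike.star_def]
  rfl

theorem trace_reduced (ρ : Matrix (V → Fin d) (V → Fin d) ℂ) :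
    (reduced I ρ).trace = ρ.trace := by
  simp only [trace, Matrix.diag, reduced]
  rw [← Fintype.sum_prod_type']
  exact (Equiv.piEquivPiSubtypeProd (· ∈ I) fun _ => Fin d).symm.sum_comp fun w => ρ w w

theorem vNEntropy_reduced_le_logb_of_rank_le {ψ : (V → Fin d) → ℂ} (hψ : ∑ x, ‖ψ x‖ ^ 2 = 1)
    {r : ℕ} (hr : (coeffMatrix I ψ).rank ≤ r) :
    vNEntropy (reduced I (of fun x y => ψ x * starRingEnd ℂ (ψ y))) ≤ Real.logb 2 r := by
  have htr : (reduced I (of fun x y => ψ x * starRingEnd ℂ (ψ y))).trace = 1 := by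
    rw [trace_reduced]
    simp only [trace, diag_apply, of_apply, Complex.mul_conj, Complex.normSq_eq_norm_sq,
      Complex.ofReal_pow]
    exact_mod_cast hψ
  rw [reduced_of_mul_star] at htr ⊢
  exact vNEntropy_le_logb_of_rank_le (posSemidef_self_mul_conjTranspose _) htr
    (by rwa [rank_self_mul_conjTranspose])

end PartialTrace

def Sym2.endpointSum {V R : Type*} [AddCommMagma R] (Y : V → R) : Sym2 V → R :=
  Sym2.lift ⟨fun u v => Y u + Y v, fun _ _ => add_comm _ _⟩

namespace SimpleGraph

variable {V R : Type*} (G : SimpleGraph V) [Fintype G.edgeSet] [CommRing R]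

def edgeForm (Y : V → R) : R :=
  ∑ e ∈ G.edgeFinset, Sym2.lift ⟨fun u v => Y u * Y v, fun _ _ => mul_comm _ _⟩ e

theorem edgeForm_add_of_mul_eq_zero {X Z : V → R} (h : ∀ v, X v * Z v = 0) :
    G.edgeForm (X + Z) = G.edgeForm X + G.edgeForm Z +
      ∑ e ∈ G.edgeFinset, Sym2.endpointSum X e * Sym2.endpointSum Z e := by
  simp only [edgeForm, ← sum_add_distrib]
  refine sum_congr rfl fun e _ => ?_
  induction e using Sym2.ind with
  | _ a b =>
    simp only [Sym2.lift_mk, Sym2.endpointSum, Pi.add_apply]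
    linear_combination -h a - h b

variable [Fintype V] [DecidableEq V]

def crossingEdges (I : Finset V) : Finset (Sym2 V) :=
  G.edgeFinset.filter fun e => ∃ u v, u ∈ I ∧ v ∉ I ∧ e = s(u, v)

theorem sum_endpointSum_mul_eq_sum_crossingEdges {I : Finset V} {X Z : V → R}
    (hX : ∀ v ∉ I, X v = 0) (hZ : ∀ v ∈ I, Z v = 0) :
    ∑ e ∈ G.edgeFinset, Sym2.endpointSum X e * Sym2.endpointSum Z e =
      ∑ e ∈ G.crossingEdges I, Sym2.endpointSum X e * Sym2.endpointSum Z e := by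
  refine (sum_subset (filter_subset _ _) fun e he hcross => ?_).symm
  induction e using Sym2.ind with
  | _ a b =>
    simp only [mem_filter, not_and, not_exists] at hcross
    by_cases ha : a ∈ I <;> by_cases hb : b ∈ I
    · simp [Sym2.endpointSum, hZ a ha, hZ b hb]
    · exact absurd rfl (hcross he a b ha hb)
    · exact absurd Sym2.eq_swap (hcross he b a hb ha)
    · simp [Sym2.endpointSum, hX a ha, hX b hb]

theorem edgeForm_add_eq_add_crossingEdges {I : Finset V} {X Z : V → R}
    (hX : ∀ v ∉ I, X v = 0) (hZ : ∀ v ∈ I, Z v = 0) :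
    G.edgeForm (X + Z) = G.edgeForm X + G.edgeForm Z +
      ∑ e ∈ G.crossingEdges I, Sym2.endpointSum X e * Sym2.endpointSum Z e := by
  rw [edgeForm_add_of_mul_eq_zero, sum_endpointSum_mul_eq_sum_crossingEdges G hX hZ]
  intro v
  by_cases hv : v ∈ I
  · rw [hZ v hv, mul_zero]
  · rw [hX v hv, zero_mul]

theorem rank_coeffMatrix_le_two_pow_card_crossingEdges (I : Finset V) (c : ℂ) :
    (coeffMatrix I fun w : V → Fin 2 =>
        c * (((G.edgeForm fun u => ((w u : ℕ) : ℤ)).negOnePow : ℤ) : ℂ)).rank ≤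
      2 ^ (G.crossingEdges I).card := by
  set e := Equiv.piEquivPiSubtypeProd (· ∈ I) fun _ : V => Fin 2
  set X : ({i // i ∈ I} → Fin 2) → V → ℤ := fun x u => ((e.symm (x, 0) u : ℕ) : ℤ)
  set Z : ({i // i ∉ I} → Fin 2) → V → ℤ := fun z u => ((e.symm (0, z) u : ℕ) : ℤ)
  have hX : ∀ x, ∀ v ∉ I, X x v = 0 := by intro x v hv; simp [X, e, hv]
  have hZ : ∀ z, ∀ v ∈ I, Z z v = 0 := by intro z v hv; simp [Z, e, hv]
  have hXZ : ∀ x z, (fun u => ((e.symm (x, z) u : ℕ) : ℤ)) = X x + Z z := by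
    intro x z
    funext u
    by_cases hu : u ∈ I <;> simp [X, Z, e, hu]
  refine (rank_le_card_of_apply_eq_mul
    (fun x => c * (((G.edgeForm (X x)).negOnePow : ℤ) : ℂ))
    (fun x (f : G.crossingEdges I) => (Sym2.endpointSum (X x) f).negOnePow)
    (fun t z => ((((G.edgeForm (Z z)).negOnePow *
      ∏ f, t f ^ Sym2.endpointSum (Z z) f : ℤˣ) : ℤ) : ℂ))
    fun x z => ?_).trans_eq ?_
  · simp only [coeffMatrix, of_apply]
    rw [hXZ, edgeForm_add_eq_add_crossingEdges G (hX x) (hZ z), Int.negOnePow_add,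
      Int.negOnePow_add, Int.negOnePow_sum, ← prod_coe_sort]
    simp only [Int.negOnePow_mul]
    push_cast
    ring
  · simp [Fintype.card_units_int]

end SimpleGraph

theorem sum_norm_sq_eq_one_of_norm_eq {V : Type*} [Fintype V] [DecidableEq V]
    {ψ : (V → Fin 2) → ℂ} (h : ∀ x, ‖ψ x‖ = (2 : ℝ) ^ (-(Fintype.card V : ℝ) / 2)) :
    ∑ x, ‖ψ x‖ ^ 2 = 1 := by
  simp only [h, sum_const, card_univ, Fintype.card_fun, Fintype.card_fin, nsmul_eq_mul]
  rw [← Real.rpow_natCast _ 2, ← Real.rpow_mul zero_le_two, Nat.cast_pow, Nat.cast_ofNat,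
    ← Real.rpow_natCast, ← Real.rpow_add two_pos]
  norm_num

open scoped Classical in
/-- **Area law for graph states.** For a finite simple graph `G = (V, E)` on `N` vertices,
the graph state `ψ(x) = 2^{−N/2}·(−1)^{q(x)}`, `q(x) = ∑_{{u,v}∈E} x_u x_v`, is a unit
vector and for every `I ⊆ V` the entanglement entropy of the reduction to `I` is at most
the number of edges crossing between `I` and its complement. -/
theorem graph_state_area_law {V : Type*} [Fintype V] [DecidableEq V]
    (G : SimpleGraph V) [DecidableRel G.Adj]
    (N : ℕ) (hN : N = Fintype.card V)
    (q : (V → Fin 2) → ℤ)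
    (hq : ∀ x, q x = ∑ e ∈ G.edgeFinset,
      Sym2.lift ⟨fun u v => ((x u : ℕ) : ℤ) * ((x v : ℕ) : ℤ),
        fun u v => mul_comm _ _⟩ e)
    (ψ : (V → Fin 2) → ℂ)
    (hψ : ∀ x, ψ x = (((2 : ℝ) ^ (-(N : ℝ) / 2) * (-1 : ℝ) ^ (q x) : ℝ) : ℂ)) :
    (∑ x, ‖ψ x‖ ^ 2 = 1) ∧
    ∀ I : Finset V,
      vNEntropy (reduced I (Matrix.of fun x y => ψ x * starRingEnd ℂ (ψ y))) ≤
        ((G.edgeFinset.filter fun e => ∃ u v, u ∈ I ∧ v ∉ I ∧ e = s(u, v)).card : ℝ) := by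
  subst hN
  have hunit : ∑ x, ‖ψ x‖ ^ 2 = 1 := sum_norm_sq_eq_one_of_norm_eq fun x => by
    simp [hψ, abs_of_nonneg (Real.rpow_nonneg zero_le_two _)]
  refine ⟨hunit, fun I => ?_⟩
  have hψ_sign : ψ = fun w => ((2 ^ (-(Fintype.card V : ℝ) / 2) : ℝ) : ℂ) *
      (((G.edgeForm fun u => ((w u : ℕ) : ℤ)).negOnePow : ℤ) : ℂ) := by
    funext w
    rw [hψ, hq]
    push_cast [Int.cast_negOnePow_eq_zpow]
    rfl
  have hrank : (coeffMatrix I ψ).rank ≤ 2 ^ (G.crossingEdges I).card :=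
    hψ_sign ▸ G.rank_coeffMatrix_le_two_pow_card_crossingEdges I _
  refine (vNEntropy_reduced_le_logb_of_rank_le I hunit hrank).trans_eq ?_
  rw [Nat.cast_pow, Nat.cast_ofNat, Real.logb_pow, Real.logb_self_eq_one one_lt_two, mul_one]
  rfl
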